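/- arXiv:1401.2190 — 10 statements merged into one kernel-verified Lean document; each statement's English description precedes it below -/
import Mathlib

section
/- The almost product structure P(U,V) = (pq⁻¹V, qp⁻¹U) on S³×S³ is an isometry for the nearly Kähler metric g: g(PX,PY) = g(X,Y) for all tangent vectors X,Y at any point (p,q). -/
/-!
Left multiplication by a unit quaternion is an isometry of `ℍ`, so `P` preserves the product
metric `⟨·,·⟩` as soon as `‖p‖ = ‖q‖ ≠ 0`. Moreover `P` anticommutes with `J`, hence
`⟨JPX, JPY⟩ = ⟨PJX, PJY⟩ = ⟨JX, JY⟩`, and both summands of `g` are preserved.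
-/

open Quaternion

noncomputable section

/-- The almost complex structure `J` at the point `(p, q)` of `S³ × S³`,
acting on `T_p S³ × T_q S³ ⊆ ℍ × ℍ`:
`J(U,V) = (1/√3)(2pq⁻¹V − U, −2qp⁻¹U + V)`. -/
def Jmap (p q : ℍ[ℝ]) (W : ℍ[ℝ] × ℍ[ℝ]) : ℍ[ℝ] × ℍ[ℝ] :=
  (Real.sqrt 3)⁻¹ •
    ((2 : ℝ) • (p * q⁻¹ * W.2) - W.1, -((2 : ℝ) • (q * p⁻¹ * W.1)) + W.2)

/-- The almost product structure `P` at `(p, q)`: `P(U,V) = (pq⁻¹V, qp⁻¹U)`. -/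
def Pmap (p q : ℍ[ℝ]) (W : ℍ[ℝ] × ℍ[ℝ]) : ℍ[ℝ] × ℍ[ℝ] :=
  (p * q⁻¹ * W.2, q * p⁻¹ * W.1)

/-- The product round metric on `S³ × S³` (on tangent pairs). -/
def prodInner (X Y : ℍ[ℝ] × ℍ[ℝ]) : ℝ :=
  (inner ℝ X.1 Y.1 : ℝ) + (inner ℝ X.2 Y.2 : ℝ)

/-- The nearly Kähler metric `g(X,Y) = (1/2)(⟨X,Y⟩ + ⟨JX,JY⟩)` at `(p,q)`. -/
def gmet (p q : ℍ[ℝ]) (X Y : ℍ[ℝ] × ℍ[ℝ]) : ℝ :=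
  (1 / 2) * (prodInner X Y + prodInner (Jmap p q X) (Jmap p q Y))

theorem Quaternion.inner_mul_left_of_norm_eq_one {a : ℍ[ℝ]} (ha : ‖a‖ = 1) (U V : ℍ[ℝ]) :
    inner ℝ (a * U) (a * V) = inner ℝ U V :=
  (LinearMap.norm_map_iff_inner_map_map (LinearMap.mulLeft ℝ a)).1
    (fun x => by simp [norm_mul, ha]) U V

theorem prodInner_neg_neg (X Y : ℍ[ℝ] × ℍ[ℝ]) : prodInner (-X) (-Y) = prodInner X Y := by
  simp [prodInner]

theorem prodInner_Pmap {p q : ℍ[ℝ]} (hpq : ‖p‖ = ‖q‖) (hq : q ≠ 0) (X Y : ℍ[ℝ] × ℍ[ℝ]) :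
    prodInner (Pmap p q X) (Pmap p q Y) = prodInner X Y := by
  have hq' : ‖q‖ ≠ 0 := norm_ne_zero_iff.2 hq
  have hpq' : ‖p * q⁻¹‖ = 1 := by simp [norm_mul, norm_inv, hpq, hq']
  have hqp' : ‖q * p⁻¹‖ = 1 := by simp [norm_mul, norm_inv, hpq, hq']
  rw [prodInner, prodInner, Pmap, Pmap, inner_mul_left_of_norm_eq_one hpq',
    inner_mul_left_of_norm_eq_one hqp', add_comm]

theorem Jmap_Pmap {p q : ℍ[ℝ]} (hp : p ≠ 0) (hq : q ≠ 0) (X : ℍ[ℝ] × ℍ[ℝ]) :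
    Jmap p q (Pmap p q X) = -Pmap p q (Jmap p q X) := by
  have hab : ∀ W, p * q⁻¹ * (q * p⁻¹ * W) = W := fun W => by
    simp [← mul_assoc, hp, hq]
  have hba : ∀ W, q * p⁻¹ * (p * q⁻¹ * W) = W := fun W => by
    simp [← mul_assoc, hp, hq]
  ext <;> simp [Jmap, Pmap, hab, hba, mul_add, mul_sub, smul_sub, smul_add] <;> abel

/-- `P` is an isometry of the nearly Kähler metric `g`. -/
theorem stmt_4 (p q : ℍ[ℝ]) (hp : ‖p‖ = 1) (hq : ‖q‖ = 1)
    (X Y : ℍ[ℝ] × ℍ[ℝ]) :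
    gmet p q (Pmap p q X) (Pmap p q Y) = gmet p q X Y := by
  have hp0 : p ≠ 0 := norm_ne_zero_iff.1 (by simp [hp])
  have hq0 : q ≠ 0 := norm_ne_zero_iff.1 (by simp [hq])
  have hpq : ‖p‖ = ‖q‖ := hp.trans hq.symm
  rw [gmet, gmet, Jmap_Pmap hp0 hq0, Jmap_Pmap hp0 hq0, prodInner_neg_neg,
    prodInner_Pmap hpq hq0, prodInner_Pmap hpq hq0]
end
end

section
/- For each triple (a,b,c) of unit quaternions, the diffeomorphism F(p,q) = (apc⁻¹, bqc⁻¹) of S³×S³ commutes with the almost complex structure J, i.e. dF ∘ J = J ∘ dF. -/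
open Quaternion

noncomputable section

/-- The differential of `F(p,q) = (apc⁻¹, bqc⁻¹)` on tangent pairs. -/
def dF (a b c : ℍ[ℝ]) (W : ℍ[ℝ] × ℍ[ℝ]) : ℍ[ℝ] × ℍ[ℝ] :=
  (a * W.1 * c⁻¹, b * W.2 * c⁻¹)

/-! `J` sees the base point `(p, q)` only through `p q⁻¹` and `q p⁻¹`. Under `F` these become
`a (p q⁻¹) b⁻¹` and `b (q p⁻¹) a⁻¹`, and in `J (dF W)` the outer `b⁻¹ b`, `a⁻¹ a` and `c⁻¹ c`
cancel, leaving `dF (J W)`. -/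

section DivisionRing

variable {R : Type*} [DivisionRing R]

theorem mul_mul_inv_mul_of_mul_right (p q v r : R) :
    p * r * (q * r)⁻¹ * (v * r) = p * q⁻¹ * v * r := by
  rcases eq_or_ne r 0 with rfl | hr
  · simp
  · simp [mul_inv_rev, mul_assoc, mul_inv_cancel_left₀ hr]

theorem mul_mul_inv_mul_of_mul_left {b : R} (hb : b ≠ 0) (a p q v : R) :
    a * p * (b * q)⁻¹ * (b * v) = a * (p * q⁻¹ * v) := by
  simp [mul_inv_rev, mul_assoc, inv_mul_cancel_left₀ hb]

theorem mul_mul_inv_mul_of_mul_left_right {b : R} (hb : b ≠ 0) (a c p q v : R) :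
    a * p * c⁻¹ * (b * q * c⁻¹)⁻¹ * (b * v * c⁻¹) = a * (p * q⁻¹ * v) * c⁻¹ := by
  rw [mul_mul_inv_mul_of_mul_right, mul_mul_inv_mul_of_mul_left hb]

end DivisionRing

theorem dF_Jmap {a b : ℍ[ℝ]} (ha : a ≠ 0) (hb : b ≠ 0) (c p q : ℍ[ℝ]) (W : ℍ[ℝ] × ℍ[ℝ]) :
    dF a b c (Jmap p q W) = Jmap (a * p * c⁻¹) (b * q * c⁻¹) (dF a b c W) := by
  simp only [dF, Jmap, mul_mul_inv_mul_of_mul_left_right ha, mul_mul_inv_mul_of_mul_left_right hb,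
    Prod.smul_mk, mul_smul_comm, smul_mul_assoc, mul_sub, sub_mul, mul_add, add_mul, mul_neg,
    neg_mul]

theorem stmt_5_general (a b c p q : ℍ[ℝ]) (ha : ‖a‖ = 1) (hb : ‖b‖ = 1) (W : ℍ[ℝ] × ℍ[ℝ]) :
    dF a b c (Jmap p q W) = Jmap (a * p * c⁻¹) (b * q * c⁻¹) (dF a b c W) :=
  dF_Jmap (norm_ne_zero_iff.mp (ha ▸ one_ne_zero)) (norm_ne_zero_iff.mp (hb ▸ one_ne_zero)) c p q W

/-- `F(p,q) = (apc⁻¹, bqc⁻¹)` commutes with `J`: `dF ∘ J = J ∘ dF`. -/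
theorem stmt_5 (a b c p q : ℍ[ℝ]) (ha : ‖a‖ = 1) (hb : ‖b‖ = 1) (hc : ‖c‖ = 1)
    (hp : ‖p‖ = 1) (hq : ‖q‖ = 1) (W : ℍ[ℝ] × ℍ[ℝ]) :
    dF a b c (Jmap p q W) = Jmap (a * p * c⁻¹) (b * q * c⁻¹) (dF a b c W) :=
  stmt_5_general a b c p q ha hb W
end
end

section
/- For each triple (a,b,c) of unit quaternions, the map F(p,q) = (apc⁻¹, bqc⁻¹) is an isometry of the nearly Kähler metric g on S³×S³. -/
open Quaternion

noncomputable section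

/-! `dF` intertwines the almost complex structures at `(p, q)` and at `F(p, q)`, because
`(apc⁻¹)(bqc⁻¹)⁻¹ = a(pq⁻¹)b⁻¹`; and two-sided multiplication by unit quaternions preserves the
round inner product. So both terms `⟨X, Y⟩` and `⟨JX, JY⟩` of `g` are preserved. -/

open scoped InnerProductSpace

theorem Quaternion.inner_mul_mul_of_norm_eq_one {a c : ℍ[ℝ]} (ha : ‖a‖ = 1) (hc : ‖c‖ = 1)
    (x y : ℍ[ℝ]) : ⟪a * x * c, a * y * c⟫_ℝ = ⟪x, y⟫_ℝ :=
  let L : ℍ[ℝ] →ₗᵢ[ℝ] ℍ[ℝ] :=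
    { toLinearMap := LinearMap.mulRight ℝ c ∘ₗ LinearMap.mulLeft ℝ a
      norm_map' := fun x => by simp [norm_mul, ha, hc] }
  L.inner_map_map x y

theorem prodInner_dF {a b c : ℍ[ℝ]} (ha : ‖a‖ = 1) (hb : ‖b‖ = 1) (hc : ‖c‖ = 1)
    (X Y : ℍ[ℝ] × ℍ[ℝ]) : prodInner (dF a b c X) (dF a b c Y) = prodInner X Y := by
  have hc' : ‖c⁻¹‖ = 1 := by rw [norm_inv, hc, inv_one]
  simp only [prodInner, dF, Quaternion.inner_mul_mul_of_norm_eq_one ha hc',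
    Quaternion.inner_mul_mul_of_norm_eq_one hb hc']

theorem mul_mul_inv_mul_inv_mul_mul_mul_inv {R : Type*} [DivisionRing R] {b c : R}
    (hb : b ≠ 0) (hc : c ≠ 0) (a p q w : R) :
    a * p * c⁻¹ * (b * q * c⁻¹)⁻¹ * (b * w * c⁻¹) = a * (p * q⁻¹ * w) * c⁻¹ := by
  simp only [mul_inv_rev, inv_inv, mul_assoc, inv_mul_cancel_left₀ hb, inv_mul_cancel_left₀ hc]

theorem Jmap_dF {a b c : ℍ[ℝ]} (ha : a ≠ 0) (hb : b ≠ 0) (hc : c ≠ 0) (p q : ℍ[ℝ])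
    (W : ℍ[ℝ] × ℍ[ℝ]) :
    Jmap (a * p * c⁻¹) (b * q * c⁻¹) (dF a b c W) = dF a b c (Jmap p q W) := by
  simp only [Jmap, dF, mul_mul_inv_mul_inv_mul_mul_mul_inv hb hc,
    mul_mul_inv_mul_inv_mul_mul_mul_inv ha hc, Prod.smul_mk, mul_smul_comm, smul_mul_assoc,
    mul_sub, sub_mul, mul_add, add_mul, mul_neg, neg_mul]

theorem stmt_6_general (a b c p q : ℍ[ℝ]) (ha : ‖a‖ = 1) (hb : ‖b‖ = 1) (hc : ‖c‖ = 1)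
    (X Y : ℍ[ℝ] × ℍ[ℝ]) :
    gmet (a * p * c⁻¹) (b * q * c⁻¹) (dF a b c X) (dF a b c Y) = gmet p q X Y := by
  have ne_zero {x : ℍ[ℝ]} (hx : ‖x‖ = 1) : x ≠ 0 := norm_ne_zero_iff.mp (hx ▸ one_ne_zero)
  simp only [gmet, Jmap_dF (ne_zero ha) (ne_zero hb) (ne_zero hc), prodInner_dF ha hb hc]

/-- `F(p,q) = (apc⁻¹, bqc⁻¹)` is an isometry of the nearly
Kähler metric `g`. -/
theorem stmt_6 (a b c p q : ℍ[ℝ]) (ha : ‖a‖ = 1) (hb : ‖b‖ = 1) (hc : ‖c‖ = 1)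
    (hp : ‖p‖ = 1) (hq : ‖q‖ = 1) (X Y : ℍ[ℝ] × ℍ[ℝ]) :
    gmet (a * p * c⁻¹) (b * q * c⁻¹) (dF a b c X) (dF a b c Y) = gmet p q X Y :=
  stmt_6_general a b c p q ha hb hc X Y
end
end

section
/- Let R̃ be the tensor R̃(U,V)W = (5/12)(g(V,W)U − g(U,W)V) + (1/12)(g(JV,W)JU − g(JU,W)JV − 2g(JU,V)JW) + (1/3)(g(PV,W)PU − g(PU,W)PV + g(PJV,W)PJU − g(PJU,W)PJV). If Ω is a 2-plane spanned by a g-orthonormal pair {X, JX} with P(Ω) ⊥ Ω, then the sectional curvature g(R̃(X,JX)JX, X) equals 2/3. -/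
open RealInnerProductSpace

/-- for the curvature tensor `R̃` of the nearly Kähler `S³×S³`
(expressed algebraically through `g`, `J`, `P` on a tangent space), a
`J`-invariant 2-plane `Ω = span{X, JX}` with `P(Ω) ⊥ Ω` has sectional
curvature `2/3`. -/
theorem stmt_7 {E : Type*} [NormedAddCommGroup E] [InnerProductSpace ℝ E]
    (J P : E →ₗ[ℝ] E)
    (hJ2 : ∀ x, J (J x) = -x) (hP2 : ∀ x, P (P x) = x)
    (hPJ : ∀ x, P (J x) = -J (P x))
    (hJg : ∀ x y, ⟪J x, J y⟫ = ⟪x, y⟫)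
    (hPg : ∀ x y, ⟪P x, P y⟫ = ⟪x, y⟫)
    (R : E → E → E → E)
    (hR : ∀ U V W, R U V W =
      (5 / 12 : ℝ) • (⟪V, W⟫ • U - ⟪U, W⟫ • V)
      + (1 / 12 : ℝ) •
          (⟪J V, W⟫ • J U - ⟪J U, W⟫ • J V - (2 : ℝ) • (⟪J U, V⟫ • J W))
      + (1 / 3 : ℝ) •
          (⟪P V, W⟫ • P U - ⟪P U, W⟫ • P V
            + ⟪P (J V), W⟫ • P (J U) - ⟪P (J U), W⟫ • P (J V)))
    (X : E) (hX : ⟪X, X⟫ = 1) (hXJX : ⟪X, J X⟫ = 0)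
    (h1 : ⟪P X, X⟫ = 0) (h2 : ⟪P X, J X⟫ = 0)
    (h3 : ⟪P (J X), X⟫ = 0) (h4 : ⟪P (J X), J X⟫ = 0) :
    ⟪R X (J X) (J X), X⟫ = 2 / 3 := by
  have hJXX : ⟪J X, X⟫ = 0 := by rw [real_inner_comm]; exact hXJX
  have hJJ : ⟪J X, J X⟫ = 1 := by rw [hJg]; exact hX
  simp only [hR, hJ2, inner_add_left, inner_sub_left, inner_smul_left,
    inner_neg_left, real_inner_smul_left, hJJ, hJXX, hXJX, hX, h1, h2, h3, h4,
    real_inner_comm (P X) X]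
  simp [map_neg, h3]
  norm_num
end

section
/- With R̃ as the curvature tensor of the nearly Kähler S³×S³, if Ω is a 2-plane spanned by a g-orthonormal pair {X, JX} with P(Ω) = Ω, then the sectional curvature g(R̃(X,JX)JX, X) equals 0. -/
open RealInnerProductSpace

section NearlyKahler

variable {E : Type*} [NormedAddCommGroup E] [InnerProductSpace ℝ E] (J P : E →ₗ[ℝ] E)

noncomputable def nearlyKahlerCurvature (U V W : E) : E :=
  (5 / 12 : ℝ) • (⟪V, W⟫ • U - ⟪U, W⟫ • V)
    + (1 / 12 : ℝ) • (⟪J V, W⟫ • J U - ⟪J U, W⟫ • J V - (2 : ℝ) • (⟪J U, V⟫ • J W))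
    + (1 / 3 : ℝ) •
        (⟪P V, W⟫ • P U - ⟪P U, W⟫ • P V + ⟪P (J V), W⟫ • P (J U) - ⟪P (J U), W⟫ • P (J V))

variable {J P}

theorem inner_apply_left_eq_neg_inner_apply_right (hJ2 : ∀ x, J (J x) = -x)
    (hJg : ∀ x y, ⟪J x, J y⟫ = ⟪x, y⟫) (x y : E) : ⟪J x, y⟫ = -⟪x, J y⟫ := by
  rw [← hJg, hJ2, inner_neg_left]

theorem inner_self_apply_eq_zero (hJ2 : ∀ x, J (J x) = -x)
    (hJg : ∀ x y, ⟪J x, J y⟫ = ⟪x, y⟫) (x : E) : ⟪x, J x⟫ = 0 := by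
  have h := inner_apply_left_eq_neg_inner_apply_right hJ2 hJg x x
  rw [real_inner_comm] at h
  linarith

/-- For an isometric `P` and a unit vector `X`, the right-hand side is `2/3` of the squared
distance from `P X` to `span {X, J X}`, so it vanishes exactly when `P` preserves that plane. -/
theorem inner_nearlyKahlerCurvature_apply_apply (hJ2 : ∀ x, J (J x) = -x)
    (hPJ : ∀ x, P (J x) = -J (P x)) (hJg : ∀ x y, ⟪J x, J y⟫ = ⟪x, y⟫) (X : E) :
    ⟪nearlyKahlerCurvature J P X (J X) (J X), X⟫
      = 2 / 3 * (⟪X, X⟫ ^ 2 - ⟪P X, X⟫ ^ 2 - ⟪P X, J X⟫ ^ 2) := by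
  have hXJX := inner_self_apply_eq_zero hJ2 hJg X
  have hJXX : ⟪J X, X⟫ = 0 := by rw [real_inner_comm, hXJX]
  have hPJX_JX : ⟪P (J X), J X⟫ = -⟪P X, X⟫ := by rw [hPJ, inner_neg_left, hJg]
  have hPJX_X : ⟪P (J X), X⟫ = ⟪P X, J X⟫ := by
    rw [hPJ, inner_neg_left, inner_apply_left_eq_neg_inner_apply_right hJ2 hJg, neg_neg]
  simp only [nearlyKahlerCurvature, hJ2, map_neg, inner_add_left, inner_sub_left,
    real_inner_smul_left, inner_neg_left, hJg, hXJX, hJXX, hPJX_JX, hPJX_X]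
  ring

theorem inner_sq_add_inner_sq_of_mem_span (hJ2 : ∀ x, J (J x) = -x)
    (hJg : ∀ x y, ⟪J x, J y⟫ = ⟪x, y⟫) (hPg : ∀ x y, ⟪P x, P y⟫ = ⟪x, y⟫) {X : E} {a b : ℝ}
    (hPX : P X = a • X + b • J X) : ⟪P X, X⟫ ^ 2 + ⟪P X, J X⟫ ^ 2 = ⟪X, X⟫ ^ 2 := by
  have hXJX := inner_self_apply_eq_zero hJ2 hJg X
  have hJXX : ⟪J X, X⟫ = 0 := by rw [real_inner_comm, hXJX]
  have hnorm := hPg X X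
  rw [hPX] at hnorm ⊢
  simp only [inner_add_left, inner_add_right, real_inner_smul_left, real_inner_smul_right,
    hJg, hXJX, hJXX] at hnorm ⊢
  linear_combination ⟪X, X⟫ * hnorm

end NearlyKahler

theorem stmt_8_general {E : Type*} [NormedAddCommGroup E] [InnerProductSpace ℝ E]
    (J P : E →ₗ[ℝ] E)
    (hJ2 : ∀ x, J (J x) = -x)
    (hPJ : ∀ x, P (J x) = -J (P x))
    (hJg : ∀ x y, ⟪J x, J y⟫ = ⟪x, y⟫)
    (hPg : ∀ x y, ⟪P x, P y⟫ = ⟪x, y⟫)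
    (R : E → E → E → E)
    (hR : ∀ U V W, R U V W =
      (5 / 12 : ℝ) • (⟪V, W⟫ • U - ⟪U, W⟫ • V)
      + (1 / 12 : ℝ) •
          (⟪J V, W⟫ • J U - ⟪J U, W⟫ • J V - (2 : ℝ) • (⟪J U, V⟫ • J W))
      + (1 / 3 : ℝ) •
          (⟪P V, W⟫ • P U - ⟪P U, W⟫ • P V
            + ⟪P (J V), W⟫ • P (J U) - ⟪P (J U), W⟫ • P (J V)))
    (X : E)
    (h1 : ∃ a b : ℝ, P X = a • X + b • J X) :
    ⟪R X (J X) (J X), X⟫ = 0 := by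
  obtain ⟨a, b, hPX⟩ := h1
  have hRX : R X (J X) (J X) = nearlyKahlerCurvature J P X (J X) (J X) := hR _ _ _
  rw [hRX, inner_nearlyKahlerCurvature_apply_apply hJ2 hPJ hJg,
    ← inner_sq_add_inner_sq_of_mem_span hJ2 hJg hPg hPX]
  ring

/-- for the curvature tensor `R̃` of the nearly Kähler `S³×S³`,
a `J`-invariant 2-plane `Ω = span{X, JX}` with `P(Ω) = Ω` has sectional
curvature `0`. -/
theorem stmt_8 {E : Type*} [NormedAddCommGroup E] [InnerProductSpace ℝ E]
    (J P : E →ₗ[ℝ] E)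
    (hJ2 : ∀ x, J (J x) = -x) (hP2 : ∀ x, P (P x) = x)
    (hPJ : ∀ x, P (J x) = -J (P x))
    (hJg : ∀ x y, ⟪J x, J y⟫ = ⟪x, y⟫)
    (hPg : ∀ x y, ⟪P x, P y⟫ = ⟪x, y⟫)
    (R : E → E → E → E)
    (hR : ∀ U V W, R U V W =
      (5 / 12 : ℝ) • (⟪V, W⟫ • U - ⟪U, W⟫ • V)
      + (1 / 12 : ℝ) •
          (⟪J V, W⟫ • J U - ⟪J U, W⟫ • J V - (2 : ℝ) • (⟪J U, V⟫ • J W))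
      + (1 / 3 : ℝ) •
          (⟪P V, W⟫ • P U - ⟪P U, W⟫ • P V
            + ⟪P (J V), W⟫ • P (J U) - ⟪P (J U), W⟫ • P (J V)))
    (X : E) (hX : ⟪X, X⟫ = 1) (hXJX : ⟪X, J X⟫ = 0)
    (h1 : ∃ a b : ℝ, P X = a • X + b • J X)
    (h2 : ∃ a b : ℝ, P (J X) = a • X + b • J X) :
    ⟪R X (J X) (J X), X⟫ = 0 :=
  stmt_8_general J P hJ2 hPJ hJg hPg R hR X h1
end

section
/- An almost complex surface M in a nearly Kähler manifold (i.e. a surface with J(TM) = TM) is a minimal surface: the trace of its second fundamental form vanishes. -/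
noncomputable section

variable {n : ℕ}

/-- The ambient covariant derivative `∇_X Y` of a vector field `Y` along a
vector field `X`, for the connection determined (in a global chart) by the
Christoffel symbols `Γ`. -/
def covD (Γ : EuclideanSpace ℝ (Fin n) →
      EuclideanSpace ℝ (Fin n) →L[ℝ] EuclideanSpace ℝ (Fin n) →L[ℝ]
        EuclideanSpace ℝ (Fin n))
    (X Y : EuclideanSpace ℝ (Fin n) → EuclideanSpace ℝ (Fin n))
    (p : EuclideanSpace ℝ (Fin n)) : EuclideanSpace ℝ (Fin n) :=
  fderiv ℝ Y p (X p) + Γ p (X p) (Y p)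

/-- The ambient covariant derivative `∇_{df(X)} df(Y)` along an immersed
surface `f : ℝ² → N`, where `X, Y` are vector fields on the surface. -/
def covDsurf (Γ : EuclideanSpace ℝ (Fin n) →
      EuclideanSpace ℝ (Fin n) →L[ℝ] EuclideanSpace ℝ (Fin n) →L[ℝ]
        EuclideanSpace ℝ (Fin n))
    (f : ℝ × ℝ → EuclideanSpace ℝ (Fin n)) (X Y : ℝ × ℝ → ℝ × ℝ)
    (u : ℝ × ℝ) : EuclideanSpace ℝ (Fin n) :=
  fderiv ℝ (fun w => fderiv ℝ f w (Y w)) u (X u)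
    + Γ (f u) (fderiv ℝ f u (X u)) (fderiv ℝ f u (Y u))

local notation "E" => EuclideanSpace ℝ (Fin n)

/-- Pointwise form of the nearly Kähler condition. -/
theorem NKpt (J : E → E →L[ℝ] E) (Γ : E → E →L[ℝ] E →L[ℝ] E)
    (hJsm : ContDiff ℝ (⊤ : ℕ∞) J)
    (hNK : ∀ X : E → E, ContDiff ℝ (⊤ : ℕ∞) X → ∀ p,
      covD Γ X (fun s => J s (X s)) p = J p (covD Γ X X p))
    (p v : E) :
    fderiv ℝ J p v v + Γ p v (J p v) = J p (Γ p v v) := by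
  have h := hNK (fun _ => v) contDiff_const p
  simp only [covD] at h
  have h1 : fderiv ℝ (fun s => J s v) p v = fderiv ℝ J p v v := by
    have h := fderiv_clm_apply (hJsm.differentiable (by simp) |>.differentiableAt (x := p))
      (differentiableAt_const v)
    simp [h]
  rw [fderiv_fun_const, h1] at h
  simpa using h

/-- Differentiating `J ∘ J = -id`. -/
theorem Jsq' (J : E → E →L[ℝ] E) (hJsm : ContDiff ℝ (⊤ : ℕ∞) J)
    (hJ2 : ∀ p v, J p (J p v) = -v) (p a b : E) :
    fderiv ℝ J p a (J p b) = - J p (fderiv ℝ J p a b) := by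
  have hd : DifferentiableAt ℝ J p := hJsm.differentiable (by simp) |>.differentiableAt
  have hdb : DifferentiableAt ℝ (fun s => J s b) p := hd.clm_apply (differentiableAt_const b)
  have h0 : fderiv ℝ (fun s => J s (J s b)) p = 0 := by
    have : (fun s : E => J s (J s b)) = fun _ => -b := by funext s; exact hJ2 s b
    rw [this, fderiv_fun_const]; rfl
  have h1 := fderiv_clm_apply hd hdb
  have h2 : fderiv ℝ (fun s => J s b) p = (fderiv ℝ J p).flip b := by
    have h := fderiv_clm_apply hd (differentiableAt_const b)
    simp [h]
  have := congrArg (fun (L : (EuclideanSpace ℝ (Fin n)) →L[ℝ] _) => L a) (h0 ▸ h1)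
  simp [h2] at this
  linear_combination (norm := module) -this

/-- `(∇J)(a)(b)` pointwise. -/
def nabJ (J : E → E →L[ℝ] E) (Γ : E → E →L[ℝ] E →L[ℝ] E) (p a b : E) : E :=
  fderiv ℝ J p a b + Γ p a (J p b) - J p (Γ p a b)

theorem nabJ_diag (J : E → E →L[ℝ] E) (Γ : E → E →L[ℝ] E →L[ℝ] E)
    (hJsm : ContDiff ℝ (⊤ : ℕ∞) J)
    (hNK : ∀ X : E → E, ContDiff ℝ (⊤ : ℕ∞) X → ∀ p,
      covD Γ X (fun s => J s (X s)) p = J p (covD Γ X X p))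
    (p v : E) : nabJ J Γ p v v = 0 := by
  have := NKpt J Γ hJsm hNK p v
  unfold nabJ
  linear_combination (norm := module) this

theorem nabJ_antisymm (J : E → E →L[ℝ] E) (Γ : E → E →L[ℝ] E →L[ℝ] E)
    (hJsm : ContDiff ℝ (⊤ : ℕ∞) J)
    (hNK : ∀ X : E → E, ContDiff ℝ (⊤ : ℕ∞) X → ∀ p,
      covD Γ X (fun s => J s (X s)) p = J p (covD Γ X X p))
    (p a b : E) : nabJ J Γ p a b = - nabJ J Γ p b a := by
  have h1 := nabJ_diag J Γ hJsm hNK p (a + b)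
  have h2 := nabJ_diag J Γ hJsm hNK p a
  have h3 := nabJ_diag J Γ hJsm hNK p b
  unfold nabJ at *
  simp only [map_add, ContinuousLinearMap.add_apply] at h1
  linear_combination (norm := module) h1 - h2 - h3

theorem nabJ_J (J : E → E →L[ℝ] E) (Γ : E → E →L[ℝ] E →L[ℝ] E)
    (hJsm : ContDiff ℝ (⊤ : ℕ∞) J) (hJ2 : ∀ p v, J p (J p v) = -v)
    (p a b : E) : nabJ J Γ p a (J p b) = - J p (nabJ J Γ p a b) := by
  have h1 := Jsq' J hJsm hJ2 p a b
  unfold nabJ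
  simp only [map_add, map_sub, map_neg, hJ2]
  linear_combination (norm := module) h1

/-- the key identity `(∇J)(Jv)(v) = 0`. -/
theorem nabJ_Jv_v (J : E → E →L[ℝ] E) (Γ : E → E →L[ℝ] E →L[ℝ] E)
    (hJsm : ContDiff ℝ (⊤ : ℕ∞) J) (hJ2 : ∀ p v, J p (J p v) = -v)
    (hNK : ∀ X : E → E, ContDiff ℝ (⊤ : ℕ∞) X → ∀ p,
      covD Γ X (fun s => J s (X s)) p = J p (covD Γ X X p))
    (p v : E) : nabJ J Γ p (J p v) v = 0 := by
  rw [nabJ_antisymm J Γ hJsm hNK, nabJ_J J Γ hJsm hJ2, nabJ_diag J Γ hJsm hNK]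
  simp

/-- The frame relation: a unit tangent vector orthogonal to `F x` must be
`± J (F x)`. -/
theorem frame_eq (Gp : E →L[ℝ] E →L[ℝ] ℝ) (Jp : E →L[ℝ] E)
    (hGsymm : ∀ v w, Gp v w = Gp w v) (hJ2 : ∀ v, Jp (Jp v) = -v)
    (hJiso : ∀ v w, Gp (Jp v) (Jp w) = Gp v w)
    (F : ℝ × ℝ →L[ℝ] E)
    (x y z : ℝ × ℝ) (hz : F z = Jp (F x))
    (hxx : Gp (F x) (F x) = 1) (hyy : Gp (F y) (F y) = 1)
    (hxy : Gp (F x) (F y) = 0) :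
    F y = Gp (F y) (Jp (F x)) • Jp (F x) ∧ (Gp (F y) (Jp (F x)))^2 = 1 := by
  set FX := F x with hFX
  set JFX := Jp (F x) with hJFX
  have hJx : Gp JFX FX = 0 := by
    have h1 := hJiso FX JFX
    rw [hJ2] at h1
    have h2 := hGsymm FX JFX
    simp only [map_neg] at h1
    linarith [hGsymm JFX FX]
  have hJJ : Gp JFX JFX = 1 := by rw [hJFX, hJiso]; exact hxx
  have hli : LinearIndependent ℝ ![x, z] := by
    rw [LinearIndependent.pair_iff]
    intro s t hst
    have hF : s • FX + t • JFX = 0 := by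
      rw [← hz, hFX, ← map_smul, ← map_smul, ← map_add, hst, map_zero]
    have hs : s = 0 := by
      have := congrArg (fun v => Gp v FX) hF
      simpa [hxx, hJx] using this
    have ht : t = 0 := by
      have := congrArg (fun v => Gp v JFX) hF
      simpa [hJJ, hGsymm FX JFX, hJx, hGsymm JFX FX] using this
    exact ⟨hs, ht⟩
  have hspan : Submodule.span ℝ {x, z} = ⊤ := by
    have hcard : Fintype.card (Fin 2) = Module.finrank ℝ (ℝ × ℝ) := by simp
    have h := (basisOfLinearIndependentOfCardEqFinrank hli hcard).span_eq
    rw [coe_basisOfLinearIndependentOfCardEqFinrank] at h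
    have hr : Set.range ![x, z] = {x, z} := by
      ext v
      simp [Matrix.range_cons, Matrix.range_empty, or_comm]
    rwa [hr] at h
  have hy : y ∈ Submodule.span ℝ ({x, z} : Set (ℝ × ℝ)) := hspan ▸ Submodule.mem_top
  obtain ⟨a, b, hab⟩ := Submodule.mem_span_pair.mp hy
  have hFy : F y = a • FX + b • JFX := by
    rw [← hab, map_add, map_smul, map_smul, ← hz]
  have ha : a = 0 := by
    have := congrArg (fun v => Gp FX v) hFy
    simpa [hxy, hxx, hGsymm FX JFX, hJx, eq_comm] using this
  have hFy2 : F y = b • JFX := by rw [hFy, ha]; simp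
  have hb : Gp (F y) JFX = b := by
    rw [hFy2]; simp [hJJ]
  have hbb : b ^ 2 = 1 := by
    have := hyy
    rw [hFy2] at this
    simp only [map_smul, ContinuousLinearMap.smul_apply, smul_eq_mul, hJJ] at this
    nlinarith
  refine ⟨?_, by rw [hb]; exact hbb⟩
  rw [hb, hFy2]

theorem pm_eq {a b : ℝ} (ha : a ^ 2 = 1) (hb : b ^ 2 = 1) (h : |a - b| < 2) : a = b := by
  have ha' : a = 1 ∨ a = -1 := by
    rcases mul_eq_zero.mp (show (a - 1) * (a + 1) = 0 by nlinarith) with h' | h'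
    · left; linarith
    · right; linarith
  have hb' : b = 1 ∨ b = -1 := by
    rcases mul_eq_zero.mp (show (b - 1) * (b + 1) = 0 by nlinarith) with h' | h'
    · left; linarith
    · right; linarith
  rcases ha' with rfl | rfl <;> rcases hb' with rfl | rfl <;> norm_num at h <;> norm_num

/-- an almost complex surface `M` (a surface with `J`-invariant
tangent planes) in a nearly Kähler manifold `(N, g, J)` is minimal: the trace
of its second fundamental form vanishes.  Here `N` is described in a global
chart `EuclideanSpace ℝ (Fin n)` with Riemannian metric `G`, Levi-Civita
connection given by Christoffel symbols `Γ` (torsion-free, metric-compatible),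
and almost complex structure `J`, satisfying the nearly Kähler condition
`(∇̃_X J) X = 0`.  The second fundamental form is `h(X,Y) = ` normal component
of `∇̃_X Y`; its trace with respect to a `g`-orthonormal tangent frame
`{df(X), df(Y)}` vanishes iff `∇̃_{df(X)} df(X) + ∇̃_{df(Y)} df(Y)` is
tangent to the surface, which is the conclusion. -/
theorem stmt_9
    (G : EuclideanSpace ℝ (Fin n) →
      EuclideanSpace ℝ (Fin n) →L[ℝ] EuclideanSpace ℝ (Fin n) →L[ℝ] ℝ)
    (J : EuclideanSpace ℝ (Fin n) →
      EuclideanSpace ℝ (Fin n) →L[ℝ] EuclideanSpace ℝ (Fin n))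
    (Γ : EuclideanSpace ℝ (Fin n) →
      EuclideanSpace ℝ (Fin n) →L[ℝ] EuclideanSpace ℝ (Fin n) →L[ℝ]
        EuclideanSpace ℝ (Fin n))
    (hGsm : ContDiff ℝ (⊤ : ℕ∞) G) (hJsm : ContDiff ℝ (⊤ : ℕ∞) J) (hΓsm : ContDiff ℝ (⊤ : ℕ∞) Γ)
    -- `G` is a Riemannian metric:
    (hGsymm : ∀ p v w, G p v w = G p w v)
    (hGpos : ∀ p v, v ≠ 0 → 0 < G p v v)
    -- `(N, g, J)` is almost Hermitian:
    (hJ2 : ∀ p v, J p (J p v) = -v)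
    (hJiso : ∀ p v w, G p (J p v) (J p w) = G p v w)
    -- `Γ` gives the Levi-Civita connection: torsion-free and metric:
    (hTF : ∀ p v w, Γ p v w = Γ p w v)
    (hmetric : ∀ X Y Z : EuclideanSpace ℝ (Fin n) → EuclideanSpace ℝ (Fin n),
      ContDiff ℝ (⊤ : ℕ∞) X → ContDiff ℝ (⊤ : ℕ∞) Y → ContDiff ℝ (⊤ : ℕ∞) Z → ∀ p,
      fderiv ℝ (fun s => G s (Y s) (Z s)) p (X p)
        = G p (covD Γ X Y p) (Z p) + G p (Y p) (covD Γ X Z p))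
    -- the nearly Kähler condition `(∇̃_X J) X = 0`:
    (hNK : ∀ X : EuclideanSpace ℝ (Fin n) → EuclideanSpace ℝ (Fin n),
      ContDiff ℝ (⊤ : ℕ∞) X → ∀ p,
      covD Γ X (fun s => J s (X s)) p = J p (covD Γ X X p))
    -- `f` is an immersed surface with `J`-invariant tangent planes:
    (f : ℝ × ℝ → EuclideanSpace ℝ (Fin n)) (hfsm : ContDiff ℝ (⊤ : ℕ∞) f)
    (himm : ∀ u, Function.Injective (fderiv ℝ f u))
    (hJtan : ∀ u w, J (f u) (fderiv ℝ f u w) ∈ Set.range (fderiv ℝ f u)) :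
    -- conclusion: for every smooth `g`-orthonormal tangent frame `{X, Y}`,
    -- `∇̃_{df X} df X + ∇̃_{df Y} df Y` is tangential, i.e. `tr h = 0`.
    ∀ (u₀ : ℝ × ℝ) (X Y : ℝ × ℝ → ℝ × ℝ),
      ContDiff ℝ (⊤ : ℕ∞) X → ContDiff ℝ (⊤ : ℕ∞) Y →
      (∀ u, G (f u) (fderiv ℝ f u (X u)) (fderiv ℝ f u (X u)) = 1) →
      (∀ u, G (f u) (fderiv ℝ f u (Y u)) (fderiv ℝ f u (Y u)) = 1) →
      (∀ u, G (f u) (fderiv ℝ f u (X u)) (fderiv ℝ f u (Y u)) = 0) →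
      covDsurf Γ f X X u₀ + covDsurf Γ f Y Y u₀ ∈ Set.range (fderiv ℝ f u₀) := by
  intro u₀ X Y hX hY hXX hYY hXY
  -- the frame coefficient `c`
  have hframe : ∀ u, fderiv ℝ f u (Y u)
        = (G (f u) (fderiv ℝ f u (Y u)) (J (f u) (fderiv ℝ f u (X u))))
            • J (f u) (fderiv ℝ f u (X u))
      ∧ (G (f u) (fderiv ℝ f u (Y u)) (J (f u) (fderiv ℝ f u (X u)))) ^ 2 = 1 := by
    intro u
    obtain ⟨z, hz⟩ := hJtan u (X u)
    exact frame_eq (G (f u)) (J (f u)) (hGsymm (f u)) (hJ2 (f u)) (hJiso (f u))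
      (fderiv ℝ f u) (X u) (Y u) z hz (hXX u) (hYY u) (hXY u)
  set c : ℝ × ℝ → ℝ :=
    fun u => G (f u) (fderiv ℝ f u (Y u)) (J (f u) (fderiv ℝ f u (X u))) with hcdef
  have hc2 : ∀ u, c u ^ 2 = 1 := fun u => (hframe u).2
  have hbrel : ∀ u, fderiv ℝ f u (Y u) = c u • J (f u) (fderiv ℝ f u (X u)) :=
    fun u => (hframe u).1
  -- continuity of c, local constancy
  have hccont : Continuous c := by
    have hF : Continuous (fderiv ℝ f) := hfsm.continuous_fderiv (by simp)
    have hfc : Continuous f := hfsm.continuous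
    have hGc : Continuous G := hGsm.continuous
    have hJc : Continuous J := hJsm.continuous
    have hXc : Continuous X := hX.continuous
    have hYc : Continuous Y := hY.continuous
    have h1 : Continuous fun u => fderiv ℝ f u (Y u) := hF.clm_apply hYc
    have h2 : Continuous fun u => fderiv ℝ f u (X u) := hF.clm_apply hXc
    have h3 : Continuous fun u => J (f u) (fderiv ℝ f u (X u)) :=
      (hJc.comp hfc).clm_apply h2
    exact ((hGc.comp hfc).clm_apply h1).clm_apply h3
  have heps : ∀ᶠ u in nhds u₀, c u = c u₀ := by
    have h2 : ∀ᶠ u in nhds u₀, |c u - c u₀| < 2 := by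
      have h := Metric.tendsto_nhds.mp (hccont.continuousAt (x := u₀)) 2 two_pos
      filter_upwards [h] with u hu
      rwa [Real.dist_eq] at hu
    filter_upwards [h2] with u hu
    exact pm_eq (hc2 u) (hc2 u₀) hu
  -- differentiability facts
  have hFsm : ContDiff ℝ (⊤ : ℕ∞) (fderiv ℝ f) := hfsm.fderiv_right (by simp)
  have hg : ContDiff ℝ (⊤ : ℕ∞) (fun w => fderiv ℝ f w (X w)) := hFsm.clm_apply hX
  have hbsm : ContDiff ℝ (⊤ : ℕ∞) (fun w => fderiv ℝ f w (Y w)) := hFsm.clm_apply hY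
  have hJf : ContDiff ℝ (⊤ : ℕ∞) (fun w => J (f w)) := hJsm.comp hfsm
  have hq : ContDiff ℝ (⊤ : ℕ∞) (fun w => J (f w) (fderiv ℝ f w (X w))) := hJf.clm_apply hg
  -- notation
  set ε : ℝ := c u₀ with hεdef
  have hεε : ε * ε = 1 := by have := hc2 u₀; nlinarith
  set P : EuclideanSpace ℝ (Fin n) := f u₀ with hPdef
  set F₀ := fderiv ℝ f u₀ with hF₀def
  set g₀ : EuclideanSpace ℝ (Fin n) := fderiv ℝ f u₀ (X u₀) with hg₀def
  set Jg : EuclideanSpace ℝ (Fin n) := J P g₀ with hJgdef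
  -- derivative of the `Y`-field
  have heqb : (fun w => fderiv ℝ f w (Y w))
      =ᶠ[nhds u₀] (fun w => ε • J (f w) (fderiv ℝ f w (X w))) := by
    filter_upwards [heps] with u hu
    rw [hbrel u, hu]
  have hD1 : fderiv ℝ (fun w => fderiv ℝ f w (Y w)) u₀
      = ε • fderiv ℝ (fun w => J (f w) (fderiv ℝ f w (X w))) u₀ := by
    rw [heqb.fderiv_eq, fderiv_fun_const_smul (hq.differentiable (by simp) u₀)]
  -- derivative of `q`
  have hdJf : fderiv ℝ (fun w => J (f w)) u₀ = (fderiv ℝ J P).comp F₀ := by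
    rw [show (fun w => J (f w)) = J ∘ f from rfl]
    exact fderiv_comp u₀ (hJsm.differentiable (by simp) _) (hfsm.differentiable (by simp) _)
  have hq' : ∀ a, fderiv ℝ (fun w => J (f w) (fderiv ℝ f w (X w))) u₀ a
      = J P (fderiv ℝ (fun w => fderiv ℝ f w (X w)) u₀ a) + fderiv ℝ J P (F₀ a) g₀ := by
    intro a
    rw [fderiv_clm_apply (hJf.differentiable (by simp) u₀) (hg.differentiable (by simp) u₀), hdJf]
    simp
    rfl
  have hg' : ∀ a, fderiv ℝ (fun w => fderiv ℝ f w (X w)) u₀ a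
      = F₀ (fderiv ℝ X u₀ a) + fderiv ℝ (fderiv ℝ f) u₀ a (X u₀) := by
    intro a
    rw [fderiv_clm_apply (hFsm.differentiable (by simp) u₀) (hX.differentiable (by simp) u₀)]
    simp
    rfl
  have hb' : ∀ a, fderiv ℝ (fun w => fderiv ℝ f w (Y w)) u₀ a
      = F₀ (fderiv ℝ Y u₀ a) + fderiv ℝ (fderiv ℝ f) u₀ a (Y u₀) := by
    intro a
    rw [fderiv_clm_apply (hFsm.differentiable (by simp) u₀) (hY.differentiable (by simp) u₀)]
    simp
    rfl
  have hb'' : ∀ a, fderiv ℝ (fun w => fderiv ℝ f w (Y w)) u₀ a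
      = ε • fderiv ℝ (fun w => J (f w) (fderiv ℝ f w (X w))) u₀ a := by
    intro a; rw [hD1]; simp
  have hsymm : ∀ v w, fderiv ℝ (fderiv ℝ f) u₀ v w = fderiv ℝ (fderiv ℝ f) u₀ w v :=
    (hfsm.contDiffAt).isSymmSndFDerivAt (by simp; exact WithTop.coe_le_coe.mpr (le_top : (2 : ℕ∞) ≤ ⊤))
  -- abbreviations for the computation
  have hFYu : fderiv ℝ f u₀ (Y u₀) = ε • Jg := hbrel u₀
  -- Step 1: Dg Yu
  have S1 : fderiv ℝ (fun w => fderiv ℝ f w (X w)) u₀ (Y u₀)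
      = F₀ (fderiv ℝ X u₀ (Y u₀)) - F₀ (fderiv ℝ Y u₀ (X u₀))
        + ε • J P (fderiv ℝ (fun w => fderiv ℝ f w (X w)) u₀ (X u₀))
        + ε • fderiv ℝ J P g₀ g₀ := by
    have e1 := hb' (X u₀)
    have e2 := hb'' (X u₀)
    have e3 := hq' (X u₀)
    have e4 := hg' (Y u₀)
    have e5 := hsymm (Y u₀) (X u₀)
    have e2' : F₀ (fderiv ℝ Y u₀ (X u₀)) + fderiv ℝ (fderiv ℝ f) u₀ (X u₀) (Y u₀)
        = ε • (J P (fderiv ℝ (fun w => fderiv ℝ f w (X w)) u₀ (X u₀))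
            + fderiv ℝ J P (F₀ (X u₀)) g₀) := by
      rw [← e3, ← e2, e1]
    rw [← hg₀def] at e2'
    linear_combination (norm := module) e4 + e5 + e2'
  -- Step 2: ε • J P (Dg Yu)
  have S2 : ε • J P (fderiv ℝ (fun w => fderiv ℝ f w (X w)) u₀ (Y u₀))
      = ε • J P (F₀ (fderiv ℝ X u₀ (Y u₀))) - ε • J P (F₀ (fderiv ℝ Y u₀ (X u₀)))
        - fderiv ℝ (fun w => fderiv ℝ f w (X w)) u₀ (X u₀)
        + J P (fderiv ℝ J P g₀ g₀) := by
    rw [S1]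
    simp only [map_add, map_sub, map_smul, hJ2, smul_add, smul_sub, smul_neg, smul_smul, hεε,
      one_smul]
    module
  -- Step 3: DbY
  have S3 : fderiv ℝ (fun w => fderiv ℝ f w (Y w)) u₀ (Y u₀)
      = ε • J P (fderiv ℝ (fun w => fderiv ℝ f w (X w)) u₀ (Y u₀))
        + fderiv ℝ J P Jg g₀ := by
    rw [hb'' (Y u₀), hq' (Y u₀), hFYu]
    simp only [map_smul, ContinuousLinearMap.smul_apply, smul_add, smul_smul, hεε, one_smul]
  -- Step 4: the Γ-term for Y
  have S4 : Γ P (fderiv ℝ f u₀ (Y u₀)) (fderiv ℝ f u₀ (Y u₀)) = Γ P Jg Jg := by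
    rw [hFYu]
    simp only [map_smul, ContinuousLinearMap.smul_apply, smul_smul, hεε, one_smul]
  -- identities
  have I1 : fderiv ℝ J P Jg g₀ + Γ P Jg Jg = J P (Γ P Jg g₀) := by
    have h := nabJ_Jv_v J Γ hJsm hJ2 hNK P g₀
    unfold nabJ at h
    rw [← hJgdef] at h
    linear_combination (norm := module) h
  have I0 : J P (fderiv ℝ J P g₀ g₀) = - J P (Γ P g₀ Jg) - Γ P g₀ g₀ := by
    have h := nabJ_diag J Γ hJsm hNK P g₀
    unfold nabJ at h
    rw [← hJgdef] at h
    have h2 := congrArg (fun v => J P v) h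
    simp only [map_add, map_sub, map_zero, hJ2] at h2
    linear_combination (norm := module) h2
  have ITF : Γ P Jg g₀ = Γ P g₀ Jg := hTF P Jg g₀
  -- the final equality
  have Hfinal : covDsurf Γ f X X u₀ + covDsurf Γ f Y Y u₀
      = (-ε) • J P (F₀ (fderiv ℝ Y u₀ (X u₀) - fderiv ℝ X u₀ (Y u₀))) := by
    simp only [covDsurf, ← hPdef, ← hg₀def]
    rw [S3, S2, S4]
    have hJ' : J P (F₀ (fderiv ℝ Y u₀ (X u₀) - fderiv ℝ X u₀ (Y u₀)))
        = J P (F₀ (fderiv ℝ Y u₀ (X u₀))) - J P (F₀ (fderiv ℝ X u₀ (Y u₀))) := by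
      simp [map_sub]
    rw [hJ']
    linear_combination (norm := module) I1 + I0 + congrArg (fun v => J P v) ITF
  rw [Hfinal]
  obtain ⟨w, hw⟩ := hJtan u₀ (fderiv ℝ Y u₀ (X u₀) - fderiv ℝ X u₀ (Y u₀))
  rw [← hF₀def, ← hPdef] at hw
  exact ⟨(-ε) • w, by rw [map_smul, hw]⟩
end
end

section
/- For the torus immersion φ(s,t) = (e^{is}, e^{it}) into S³×S³ with the nearly Kähler metric g, one has g(φ_s,φ_s) = g(φ_t,φ_t) = 4/3 and g(φ_s,φ_t) = −2/3; in particular the induced metric is flat. -/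
open Quaternion

noncomputable section

/-- The point `e^{is} = cos s + i sin s` of `S³`. -/
def ep (s : ℝ) : ℍ[ℝ] := ⟨Real.cos s, Real.sin s, 0, 0⟩

/-- The velocity `−sin s + i cos s` of `s ↦ e^{is}`. -/
def eU (s : ℝ) : ℍ[ℝ] := ⟨-Real.sin s, Real.cos s, 0, 0⟩

/-! Along the torus both tangent vectors are `e^{i·}` times the unit `i`, so `q p⁻¹` carries
`φ_s` to `φ_t` and `p q⁻¹` carries `φ_t` to `φ_s`; hence `J φ_s = -(φ_s + 2 φ_t)/√3` and
`J φ_t = (2 φ_s + φ_t)/√3`, and the values of `g` follow from `|φ_s| = |φ_t| = 1`,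
`⟨φ_s, φ_t⟩ = 0` in the product metric. -/

theorem Jmap_inl (p q U : ℍ[ℝ]) :
    Jmap p q (U, 0) = (Real.sqrt 3)⁻¹ • (-U, -((2 : ℝ) • (q * p⁻¹ * U))) := by
  simp [Jmap]

theorem Jmap_inr (p q V : ℍ[ℝ]) :
    Jmap p q (0, V) = (Real.sqrt 3)⁻¹ • ((2 : ℝ) • (p * q⁻¹ * V), V) := by
  simp [Jmap]

theorem prodInner_smul_smul (c : ℝ) (X Y : ℍ[ℝ] × ℍ[ℝ]) :
    prodInner (c • X) (c • Y) = c ^ 2 * prodInner X Y := by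
  simp only [prodInner, Prod.smul_fst, Prod.smul_snd, real_inner_smul_left,
    real_inner_smul_right]
  ring

theorem eU_eq_ep_mul_eU_zero (s : ℝ) : eU s = ep s * eU 0 := by
  ext <;> simp only [Quaternion.re_mul, Quaternion.imI_mul, Quaternion.imJ_mul,
    Quaternion.imK_mul] <;> simp [ep, eU]

theorem normSq_ep (s : ℝ) : Quaternion.normSq (ep s) = 1 := by
  rw [Quaternion.normSq_def']
  simp [ep]

theorem normSq_eU (s : ℝ) : Quaternion.normSq (eU s) = 1 := by
  rw [Quaternion.normSq_def']
  simp [eU]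

theorem ep_mul_inv_mul_eU (s t : ℝ) : ep t * (ep s)⁻¹ * eU s = eU t := by
  have hs : ep s ≠ 0 := fun h => by simpa [h] using normSq_ep s
  rw [eU_eq_ep_mul_eU_zero s, eU_eq_ep_mul_eU_zero t, mul_assoc, inv_mul_cancel_left₀ hs]

/-- for the torus immersion `φ(s,t) = (e^{is}, e^{it})`,
`g(φ_s,φ_s) = g(φ_t,φ_t) = 4/3` and `g(φ_s,φ_t) = −2/3` (in particular these
are constant, so the induced metric is flat). -/
theorem stmt_11 (s t : ℝ) :
    gmet (ep s) (ep t) ((eU s, 0)) ((eU s, 0)) = 4 / 3 ∧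
    gmet (ep s) (ep t) (((0 : ℍ[ℝ]), eU t)) (((0 : ℍ[ℝ]), eU t)) = 4 / 3 ∧
    gmet (ep s) (ep t) ((eU s, 0)) (((0 : ℍ[ℝ]), eU t)) = -(2 / 3) := by
  have hJs : Jmap (ep s) (ep t) (eU s, 0) = (Real.sqrt 3)⁻¹ • (-eU s, -((2 : ℝ) • eU t)) := by
    rw [Jmap_inl, ep_mul_inv_mul_eU]
  have hJt : Jmap (ep s) (ep t) (0, eU t) = (Real.sqrt 3)⁻¹ • ((2 : ℝ) • eU s, eU t) := by
    rw [Jmap_inr, ep_mul_inv_mul_eU]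
  have hsqrt : (Real.sqrt 3)⁻¹ ^ 2 = 1 / 3 := by
    rw [inv_pow, Real.sq_sqrt (by norm_num : (0 : ℝ) ≤ 3), one_div]
  simp only [gmet, hJs, hJt, prodInner_smul_smul, hsqrt]
  simp only [prodInner, inner_neg_left, inner_neg_right, real_inner_smul_left,
    real_inner_smul_right, inner_zero_left, inner_zero_right, Quaternion.inner_self, normSq_eU]
  norm_num
end
end

section
/- For the immersion ψ(x) = ((1 − √3 x)/2, (1 + √3 x)/2) of S² (unit imaginary quaternions) into S³×S³, the image tangent planes are J-invariant, and the metric induced from the nearly Kähler metric g equals 3/2 times the standard round metric on S². -/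
/-!
Write `ψ(x) = (p, q)`. Since `x² = −1` and `√3² = 3`, the two factors satisfy `pq = qp = 1`,
`p² = −q` and `q² = −p`, so `pq⁻¹ = −q` and `qp⁻¹ = −p`. Substituting into `J` gives
`J(dψ(v)) = dψ(xv)`: on the image of `dψ`, `J` is left multiplication by `x`, which maps
`T_x S²` to itself and is an isometry. Each factor of `dψ` scales by `√3/2`, so both `⟨·,·⟩`
and `⟨J·,J·⟩` pull back to `(3/2)⟨v, w⟩`, and so does their mean `g`.
-/

open Quaternion

noncomputable section

/-- The differential of `ψ(x) = ((1 − √3 x)/2, (1 + √3 x)/2)` applied to a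
tangent vector `v` of `S²` at `x`. -/
def dpsi (v : ℍ[ℝ]) : ℍ[ℝ] × ℍ[ℝ] :=
  ((-(Real.sqrt 3 / 2)) • v, (Real.sqrt 3 / 2) • v)

namespace Quaternion

theorem re_mul_comm {R : Type*} [CommRing R] (a b : ℍ[R]) : (a * b).re = (b * a).re := by
  rw [re_mul, re_mul]; ring

theorem mul_self_eq_neg_one {x : ℍ[ℝ]} (hx : x.re = 0) (hx1 : ‖x‖ = 1) : x * x = -1 := by
  rw [← sq, sq_eq_neg_normSq.2 hx, normSq_eq_norm_mul_self, hx1, mul_one, coe_one]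

theorem norm_eq_one_of_mul_self_eq_neg_one {x : ℍ[ℝ]} (hx : x * x = -1) : ‖x‖ = 1 := by
  have h : ‖x‖ * ‖x‖ = 1 := by rw [← norm_mul, hx, norm_neg, norm_one]
  nlinarith [norm_nonneg x]

theorem inner_mul_mul_left (x v w : ℍ[ℝ]) :
    (inner ℝ (x * v) (x * w) : ℝ) = ‖x‖ ^ 2 * inner ℝ v w := by
  rw [inner_def, inner_def, star_mul, ← mul_assoc, re_mul_comm, ← mul_assoc, ← mul_assoc,
    star_mul_self, normSq_eq_norm_mul_self, mul_assoc, coe_mul_eq_smul, re_smul, smul_eq_mul, sq]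

theorem inner_mul_left_self (x v : ℍ[ℝ]) : (inner ℝ (x * v) x : ℝ) = ‖x‖ ^ 2 * v.re := by
  rw [inner_def, re_mul_comm, ← mul_assoc, star_mul_self, normSq_eq_norm_mul_self,
    coe_mul_eq_smul, re_smul, smul_eq_mul, sq]

theorem re_mul_eq_neg_inner {x : ℍ[ℝ]} (hx : x.re = 0) (v : ℍ[ℝ]) :
    (x * v).re = -inner ℝ v x := by
  rw [inner_def, star_eq_neg.2 hx, mul_neg, re_neg, neg_neg, re_mul_comm]

end Quaternion

theorem prodInner_dpsi (v w : ℍ[ℝ]) :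
    prodInner (dpsi v) (dpsi w) = (3 / 2) * (inner ℝ v w : ℝ) := by
  have h3 : Real.sqrt 3 * Real.sqrt 3 = 3 := Real.mul_self_sqrt (by norm_num)
  simp only [prodInner, dpsi, real_inner_smul_left, real_inner_smul_right]
  linear_combination (inner ℝ v w / 2 : ℝ) * h3

def psi (x : ℍ[ℝ]) : ℍ[ℝ] × ℍ[ℝ] :=
  ((1 / 2 : ℝ) • (1 - Real.sqrt 3 • x), (1 / 2 : ℝ) • (1 + Real.sqrt 3 • x))

section

variable {x : ℍ[ℝ]} (hx : x * x = -1)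
include hx

theorem half_one_add_smul_mul_half_one_add_smul (a b : ℝ) :
    ((1 / 2 : ℝ) • (1 + a • x)) * ((1 / 2 : ℝ) • (1 + b • x))
      = ((1 - a * b) / 4) • (1 : ℍ[ℝ]) + ((a + b) / 4) • x := by
  simp only [smul_mul_smul_comm, mul_add, add_mul, one_mul, mul_one, hx]
  module

theorem psi_fst_mul_snd : (psi x).1 * (psi x).2 = 1 := by
  rw [psi, sub_eq_add_neg, ← neg_smul, half_one_add_smul_mul_half_one_add_smul hx]
  norm_num

theorem psi_snd_mul_fst : (psi x).2 * (psi x).1 = 1 := by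
  rw [psi, sub_eq_add_neg, ← neg_smul, half_one_add_smul_mul_half_one_add_smul hx]
  norm_num

theorem psi_fst_mul_self : (psi x).1 * (psi x).1 = -(psi x).2 := by
  rw [psi, sub_eq_add_neg, ← neg_smul, half_one_add_smul_mul_half_one_add_smul hx]
  norm_num
  module

theorem psi_snd_mul_self : (psi x).2 * (psi x).2 = -(psi x).1 := by
  rw [psi, sub_eq_add_neg, ← neg_smul, half_one_add_smul_mul_half_one_add_smul hx]
  norm_num
  module

theorem Jmap_psi_dpsi (v : ℍ[ℝ]) : Jmap (psi x).1 (psi x).2 (dpsi v) = dpsi (x * v) := by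
  rw [Jmap, inv_eq_of_mul_eq_one_right (psi_snd_mul_fst hx),
    inv_eq_of_mul_eq_one_right (psi_fst_mul_snd hx), psi_fst_mul_self hx, psi_snd_mul_self hx]
  have hs : Real.sqrt 3 ≠ 0 := by positivity
  simp only [dpsi, psi, neg_mul, smul_mul_assoc, mul_smul_comm, sub_mul, add_mul, one_mul]
  rw [Prod.smul_mk, Prod.mk.injEq]
  constructor <;> match_scalars <;> field_simp <;> ring

theorem gmet_psi_dpsi (v w : ℍ[ℝ]) :
    gmet (psi x).1 (psi x).2 (dpsi v) (dpsi w) = (3 / 2) * (inner ℝ v w : ℝ) := by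
  rw [gmet, Jmap_psi_dpsi hx, Jmap_psi_dpsi hx, prodInner_dpsi, prodInner_dpsi,
    inner_mul_mul_left, norm_eq_one_of_mul_self_eq_neg_one hx]
  ring

end

theorem stmt_14_general (x v w : ℍ[ℝ]) (hx : x.re = 0) (hx1 : ‖x‖ = 1)
    (hv : v.re = 0) (hvx : (inner ℝ v x : ℝ) = 0) :
    (∃ v' : ℍ[ℝ], v'.re = 0 ∧ (inner ℝ v' x : ℝ) = 0 ∧
        Jmap ((1 / 2 : ℝ) • (1 - Real.sqrt 3 • x)) ((1 / 2 : ℝ) • (1 + Real.sqrt 3 • x))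
          (dpsi v) = dpsi v') ∧
    gmet ((1 / 2 : ℝ) • (1 - Real.sqrt 3 • x)) ((1 / 2 : ℝ) • (1 + Real.sqrt 3 • x))
        (dpsi v) (dpsi w) = (3 / 2) * (inner ℝ v w : ℝ) := by
  have hxx : x * x = -1 := mul_self_eq_neg_one hx hx1
  refine ⟨⟨x * v, ?_, ?_, Jmap_psi_dpsi hxx v⟩, gmet_psi_dpsi hxx v w⟩
  · rw [re_mul_eq_neg_inner hx, hvx, neg_zero]
  · rw [inner_mul_left_self, hv, mul_zero]

/-- for `ψ(x) = ((1 − √3 x)/2, (1 + √3 x)/2)` on the sphere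
`S²` of unit imaginary quaternions, the image tangent planes are
`J`-invariant, and the induced metric is `3/2` times the round metric:
`g(dψ(v), dψ(w)) = (3/2)⟨v,w⟩`. -/
theorem stmt_14 (x v w : ℍ[ℝ]) (hx : x.re = 0) (hx1 : ‖x‖ = 1)
    (hv : v.re = 0) (hvx : (inner ℝ v x : ℝ) = 0)
    (hw : w.re = 0) (hwx : (inner ℝ w x : ℝ) = 0) :
    (∃ v' : ℍ[ℝ], v'.re = 0 ∧ (inner ℝ v' x : ℝ) = 0 ∧
        Jmap ((1 / 2 : ℝ) • (1 - Real.sqrt 3 • x)) ((1 / 2 : ℝ) • (1 + Real.sqrt 3 • x))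
          (dpsi v) = dpsi v') ∧
    gmet ((1 / 2 : ℝ) • (1 - Real.sqrt 3 • x)) ((1 / 2 : ℝ) • (1 + Real.sqrt 3 • x))
        (dpsi v) (dpsi w) = (3 / 2) * (inner ℝ v w : ℝ) :=
  stmt_14_general x v w hx hx1 hv hvx
end
end

section
/- Let φ = (p,q) be an almost complex immersion into S³×S³ with isothermal coordinates (u,v), satisfying J(p_u,q_u) = (p_v,q_v). Set α = p⁻¹p_u, β = p⁻¹p_v, γ = q⁻¹q_u, δ = q⁻¹q_v. Then γ = (√3/2)β + (1/2)α and δ = (1/2)β − (√3/2)α. -/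
open Quaternion

noncomputable section

/-- The almost complex structure of `S³ × S³` transported to `T₁S³ × T₁S³` by left translation,
in the variables `(p⁻¹U, q⁻¹V)`. -/
def leftTrivJ {M : Type*} [AddCommGroup M] [Module ℝ M] (W : M × M) : M × M :=
  (Real.sqrt 3)⁻¹ • ((2 : ℝ) • W.2 - W.1, -((2 : ℝ) • W.1) + W.2)

lemma inv_mul_Jmap {p q : ℍ[ℝ]} (hp : p ≠ 0) (hq : q ≠ 0) (W : ℍ[ℝ] × ℍ[ℝ]) :
    (p⁻¹ * (Jmap p q W).1, q⁻¹ * (Jmap p q W).2) = leftTrivJ (p⁻¹ * W.1, q⁻¹ * W.2) := by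
  simp only [Jmap, leftTrivJ, Prod.smul_mk, mul_smul_comm, mul_add, mul_sub, mul_neg,
    ← mul_assoc, inv_mul_cancel_left₀ hp, inv_mul_cancel_left₀ hq]

lemma eq_of_leftTrivJ_eq {M : Type*} [AddCommGroup M] [Module ℝ M] {a b c d : M}
    (h : leftTrivJ (a, c) = (b, d)) :
    c = (Real.sqrt 3 / 2) • b + (1 / 2 : ℝ) • a ∧
    d = (1 / 2 : ℝ) • b - (Real.sqrt 3 / 2) • a := by
  have hs : Real.sqrt 3 ≠ 0 := by positivity
  have hs2 : Real.sqrt 3 ^ 2 = 3 := Real.sq_sqrt (by norm_num)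
  simp only [leftTrivJ, Prod.smul_mk, Prod.mk.injEq] at h
  obtain ⟨rfl, rfl⟩ := h
  constructor
  · match_scalars <;> field_simp
    norm_num
  · match_scalars <;> field_simp
    linear_combination hs2

/-- for an almost complex immersion `φ = (p,q)` in isothermal
coordinates, with `α = p⁻¹p_u`, `β = p⁻¹p_v`, `γ = q⁻¹q_u`, `δ = q⁻¹q_v`
and the almost complex condition `J(p_u, q_u) = (p_v, q_v)`, one has
`γ = (√3/2)β + (1/2)α` and `δ = (1/2)β − (√3/2)α`. -/
theorem stmt_16 (p q pu pv qu qv : ℍ[ℝ]) (hp : ‖p‖ = 1) (hq : ‖q‖ = 1)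
    (hac : Jmap p q (pu, qu) = (pv, qv)) :
    q⁻¹ * qu = (Real.sqrt 3 / 2) • (p⁻¹ * pv) + (1 / 2 : ℝ) • (p⁻¹ * pu) ∧
    q⁻¹ * qv = (1 / 2 : ℝ) • (p⁻¹ * pv) - (Real.sqrt 3 / 2) • (p⁻¹ * pu) := by
  have hp0 : p ≠ 0 := norm_ne_zero_iff.mp (by simp [hp])
  have hq0 : q ≠ 0 := norm_ne_zero_iff.mp (by simp [hq])
  have h := inv_mul_Jmap hp0 hq0 (pu, qu)
  rw [hac] at h
  exact eq_of_leftTrivJ_eq h.symm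
end
end

section
/- Let α, β : ℝ² → ℝ³ be smooth maps satisfying α_v − β_u = 2 α × β and α_u + β_v = (2/√3) α × β. Then the functions f = 2 α·β and h = α·α − β·β satisfy the Cauchy–Riemann equations: f_u = h_v and f_v = −h_u; hence f + ih is holomorphic in z = u + iv. -/
/-!
By the product rule, `f_u - h_v` and `f_v + h_u` are linear combinations of the dot products of
`α` and `β` with `α_v - β_u` and `α_u + β_v`. The structure equations make both of these multiples
of `α × β`, which is orthogonal to `α` and to `β`.
-/

theorem HasDerivAt.dotProduct {ι : Type*} [Fintype ι] {f g : ℝ → ι → ℝ} {f' g' : ι → ℝ}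
    {x : ℝ} (hf : HasDerivAt f f' x) (hg : HasDerivAt g g' x) :
    HasDerivAt (fun t => f t ⬝ᵥ g t) (f' ⬝ᵥ g x + f x ⬝ᵥ g') x := by
  have hsum : HasDerivAt (fun t => f t ⬝ᵥ g t) (∑ i, (f' i * g x i + f x i * g' i)) x :=
    HasDerivAt.fun_sum fun i _ => (hasDerivAt_pi.mp hf i).mul (hasDerivAt_pi.mp hg i)
  simpa only [_root_.dotProduct, Finset.sum_add_distrib] using hsum

theorem dotProduct_cauchyRiemann {R ι : Type*} [CommRing R] [Fintype ι]
    {a b au av bu bv : ι → R}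
    (ha₁ : a ⬝ᵥ (av - bu) = 0) (hb₁ : b ⬝ᵥ (av - bu) = 0)
    (ha₂ : a ⬝ᵥ (au + bv) = 0) (hb₂ : b ⬝ᵥ (au + bv) = 0) :
    2 * (au ⬝ᵥ b + a ⬝ᵥ bu) = (av ⬝ᵥ a + a ⬝ᵥ av) - (bv ⬝ᵥ b + b ⬝ᵥ bv) ∧
      2 * (av ⬝ᵥ b + a ⬝ᵥ bv) = -((au ⬝ᵥ a + a ⬝ᵥ au) - (bu ⬝ᵥ b + b ⬝ᵥ bu)) := by
  rw [dotProduct_sub] at ha₁ hb₁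
  rw [dotProduct_add] at ha₂ hb₂
  rw [dotProduct_comm au a, dotProduct_comm au b, dotProduct_comm av a, dotProduct_comm av b,
    dotProduct_comm bu b, dotProduct_comm bv b]
  constructor
  · linear_combination -2 * ha₁ + 2 * hb₂
  · linear_combination 2 * hb₁ + 2 * ha₂

/-- if `α, β : ℝ² → ℝ³` satisfy the structure equations
`α_v − β_u = 2 α × β` and `α_u + β_v = (2/√3) α × β`, then `f = 2 α·β` and
`h = α·α − β·β` satisfy the Cauchy–Riemann equations `f_u = h_v`,
`f_v = −h_u` (hence `f + ih` is holomorphic in `z = u + iv`). -/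
theorem stmt_18 (α β αu αv βu βv : ℝ → ℝ → Fin 3 → ℝ)
    (hαu : ∀ u v, HasDerivAt (fun u' => α u' v) (αu u v) u)
    (hαv : ∀ u v, HasDerivAt (fun v' => α u v') (αv u v) v)
    (hβu : ∀ u v, HasDerivAt (fun u' => β u' v) (βu u v) u)
    (hβv : ∀ u v, HasDerivAt (fun v' => β u v') (βv u v) v)
    (heq1 : ∀ u v, αv u v - βu u v = (2 : ℝ) • crossProduct (α u v) (β u v))
    (heq2 : ∀ u v,
      αu u v + βv u v = (2 / Real.sqrt 3) • crossProduct (α u v) (β u v)) :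
    ∀ u v,
      deriv (fun u' => 2 * (α u' v ⬝ᵥ β u' v)) u
        = deriv (fun v' => α u v' ⬝ᵥ α u v' - β u v' ⬝ᵥ β u v') v ∧
      deriv (fun v' => 2 * (α u v' ⬝ᵥ β u v')) v
        = -deriv (fun u' => α u' v ⬝ᵥ α u' v - β u' v ⬝ᵥ β u' v) u := by
  intro u v
  rw [((hαu u v).dotProduct (hβu u v)).const_mul 2 |>.deriv,
    ((hαv u v).dotProduct (hβv u v)).const_mul 2 |>.deriv,
    ((hαv u v).dotProduct (hαv u v)).fun_sub ((hβv u v).dotProduct (hβv u v)) |>.deriv,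
    ((hαu u v).dotProduct (hαu u v)).fun_sub ((hβu u v).dotProduct (hβu u v)) |>.deriv]
  apply dotProduct_cauchyRiemann <;>
    simp only [heq1, heq2, dotProduct_smul, dot_self_cross, dot_cross_self, smul_zero]
end
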